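/- Let K be a field of characteristic zero and P, Q ∈ K[X,Y] with Jac(P,Q) := ∂P/∂X · ∂Q/∂Y - ∂P/∂Y · ∂Q/∂X = 1. If β(P) = P and β(Q) = -Q, where β is the algebra involution of K[X,Y] with β(X) = X, β(Y) = -Y, then there exist λ ∈ K* and g ∈ K[Y²] such that Q = λY and P = X/λ + g(Y). -/

import Mathlib

open scoped BigOperators

open MvPolynomial

variable (K : Type*) [Field K]

/-- The Jacobian of a pair of polynomials in two variables. -/
noncomputable def Jac (P Q : MvPolynomial (Fin 2) K) : MvPolynomial (Fin 2) K :=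
  pderiv 0 P * pderiv 1 Q - pderiv 1 P * pderiv 0 Q

/-- The involution `β` of `K[X,Y]` with `β(X) = X`, `β(Y) = -Y`. -/
noncomputable def polyBeta : MvPolynomial (Fin 2) K →ₐ[K] MvPolynomial (Fin 2) K :=
  aeval ![X 0, -X 1]

/-!
Multiplying by `XY` turns `∂/∂X` and `∂/∂Y` into Euler operators, so the coefficient of `Xᵘ` in
`XY · Jac(P, Q)` is `∑_{m + n = u} p_m q_n det(m, n)`. If `m₀` and `n₀` are the largest exponents
of `P` and `Q` for an order given by lexicographically compared linear weights, `(m₀, n₀)` is the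
only decomposition of `m₀ + n₀`, so `Jac(P, Q) = 1` forces `det(m₀, n₀) = 0` unless
`m₀ + n₀ = (1, 1)`.

By the symmetry every exponent of `P` is even in `Y` and every exponent of `Q` is odd in `Y`, and
the constant term of the Jacobian gives `p_X q_Y = 1`. Choosing the weights along the faces of the
Newton polygons then shows that `X` is the only exponent of `P` of positive `X`-degree: for the
steepest face of `P` through `X`, the two top pairs lie on parallel lines through `X` and `Y`,
where `det` is positive. Once `P` is known, the order by `X`-degree and then `Y`-degree leaves `Y`
as the only exponent of `Q`.
-/

open Finsupp (single)
open Finset.HasAntidiagonal (antidiagonal mem_antidiagonal)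
open Function

lemma MvPolynomial.coeff_X_mul_pderiv {σ R : Type*} [CommSemiring R] (i : σ)
    (p : MvPolynomial σ R) (m : σ →₀ ℕ) : coeff m (X i * pderiv i p) = m i * coeff m p := by
  classical
  induction p using MvPolynomial.induction_on' with
  | monomial n a =>
    rw [X_mul_pderiv_monomial, coeff_smul, coeff_monomial]
    split_ifs with h <;> simp [h]
  | add p q hp hq => rw [map_add, mul_add, coeff_add, coeff_add, hp, hq, mul_add]

lemma MvPolynomial.mem_adjoin_X_pow_of_support {σ R : Type*} [CommSemiring R] {i : σ} {n : ℕ}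
    {p : MvPolynomial σ R} (h : ∀ m ∈ p.support, ∃ k, m = single i (n * k)) :
    p ∈ Algebra.adjoin R {X i ^ n} := by
  rw [p.as_sum]
  refine Subalgebra.sum_mem _ fun m hm => ?_
  obtain ⟨k, hk⟩ := h m hm
  rw [hk, ← C_mul_X_pow_eq_monomial, C_mul', pow_mul]
  exact Subalgebra.smul_mem _ (Subalgebra.pow_mem _ (Algebra.self_mem_adjoin_singleton R _) k) _

lemma Finsupp.eq_single_zero_one_iff {m : Fin 2 →₀ ℕ} : m = single 0 1 ↔ m 0 = 1 ∧ m 1 = 0 := by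
  rw [Finsupp.ext_iff, Fin.forall_fin_two]
  simp

lemma Finsupp.eq_single_one_one_iff {m : Fin 2 →₀ ℕ} : m = single 1 1 ↔ m 0 = 0 ∧ m 1 = 1 := by
  rw [Finsupp.ext_iff, Fin.forall_fin_two]
  simp

lemma Finsupp.add_eq_single_add_single_iff {m n : Fin 2 →₀ ℕ} :
    m + n = single 0 1 + single 1 1 ↔ m 0 + n 0 = 1 ∧ m 1 + n 1 = 1 := by
  rw [Finsupp.ext_iff, Fin.forall_fin_two]
  simp

lemma eq_and_eq_of_add_eq_of_le {M N : Type*} [AddCommMonoid M] [AddCommMonoid N]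
    [PartialOrder N] [IsOrderedCancelAddMonoid N] {φ : M →+ N} (hφ : Injective φ)
    {m n m₀ n₀ : M} (hm : φ m ≤ φ m₀) (hn : φ n ≤ φ n₀) (h : m + n = m₀ + n₀) :
    m = m₀ ∧ n = n₀ := by
  have := (add_eq_add_iff_eq_and_eq hm hn).1 (by rw [← map_add, ← map_add, h])
  exact ⟨hφ this.1, hφ this.2⟩

section LexWeight

variable {a b c d : ℤ}

def lexWeight (a b c d : ℤ) : (Fin 2 →₀ ℕ) →+ ℤ ×ₗ ℤ where
  toFun m := toLex (a * m 0 + b * m 1, c * m 0 + d * m 1)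
  map_zero' := by simp
  map_add' m n := by
    rw [← toLex_add]
    congr 1
    ext <;> simp only [Finsupp.coe_add, Pi.add_apply, Nat.cast_add, Prod.mk_add_mk] <;> ring

lemma lexWeight_apply (m : Fin 2 →₀ ℕ) :
    lexWeight a b c d m = toLex (a * m 0 + b * m 1, c * m 0 + d * m 1) :=
  rfl

lemma lexWeight_single_zero_one : lexWeight a b c d (single 0 1) = toLex (a, c) := by
  simp [lexWeight_apply]

lemma lexWeight_single_one_one : lexWeight a b c d (single 1 1) = toLex (b, d) := by
  simp [lexWeight_apply]

lemma lexWeight_injective (h : a * d - b * c ≠ 0) : Injective (lexWeight a b c d) := by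
  intro m n hmn
  obtain ⟨h₁, h₂⟩ := Prod.ext_iff.1 (toLex.injective hmn)
  have e₀ : (a * d - b * c) * ((m 0 : ℤ) - n 0) = 0 := by linear_combination d * h₁ - b * h₂
  have e₁ : (a * d - b * c) * ((m 1 : ℤ) - n 1) = 0 := by linear_combination a * h₂ - c * h₁
  refine Finsupp.ext (Fin.forall_fin_two.2 ⟨?_, ?_⟩)
  · have := (mul_eq_zero.1 e₀).resolve_left h
    omega
  · have := (mul_eq_zero.1 e₁).resolve_left h
    omega

end LexWeight

def expDet (m n : Fin 2 →₀ ℕ) : ℤ := m 0 * n 1 - m 1 * n 0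

lemma expDet_single_zero_one_left (n : Fin 2 →₀ ℕ) : expDet (single 0 1) n = n 1 := by
  simp [expDet]

lemma mul_expDet_of_weight_eq {a b : ℤ} {m n : Fin 2 →₀ ℕ} (hm : a * m 0 + b * m 1 = a)
    (hn : a * n 0 + b * n 1 = b) : a * expDet m n = a * n 1 - b * m 1 := by
  unfold expDet
  linear_combination (n 1 : ℤ) * hm - (m 1 : ℤ) * hn

-- `mb` maximises the slope `(m 0 - 1) / m 1`, so the line through `X` and `mb` supports `S`.
lemma exists_supporting_weight {S : Finset (Fin 2 →₀ ℕ)} (hS : ∀ m ∈ S, m 1 = 0 → m 0 ≤ 1)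
    {m : Fin 2 →₀ ℕ} (hm : m ∈ S) (hm₀ : m 0 ≠ 0) (hm₁ : m 1 ≠ 0) :
    ∃ mb ∈ S, 1 ≤ mb 0 ∧ 1 ≤ mb 1 ∧ ∀ m' ∈ S, (mb 1 : ℤ) * m' 0 + (1 - mb 0) * m' 1 ≤ mb 1 := by
  obtain ⟨mb, hmb, hmax⟩ := (S.filter (· 1 ≠ 0)).exists_max_image
    (fun m => ((m 0 : ℚ) - 1) / m 1) ⟨m, Finset.mem_filter.2 ⟨hm, hm₁⟩⟩
  obtain ⟨hmbS, hmb₁⟩ := Finset.mem_filter.1 hmb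
  have hmb₁' : (0 : ℚ) < mb 1 := by exact_mod_cast Nat.pos_of_ne_zero hmb₁
  refine ⟨mb, hmbS, ?_, Nat.one_le_iff_ne_zero.2 hmb₁, fun m' hm' => ?_⟩
  · by_contra hA
    have h := hmax m (Finset.mem_filter.2 ⟨hm, hm₁⟩)
    rw [show mb 0 = 0 by omega, Nat.cast_zero, zero_sub] at h
    have h₀ : 0 ≤ ((m 0 : ℚ) - 1) / m 1 :=
      div_nonneg (sub_nonneg.2 (by exact_mod_cast Nat.one_le_iff_ne_zero.2 hm₀)) (Nat.cast_nonneg _)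
    have h₁ : (-1 : ℚ) / mb 1 < 0 := div_neg_of_neg_of_pos (by norm_num) hmb₁'
    linarith
  · by_cases hm'₁ : m' 1 = 0
    · rw [hm'₁, Nat.cast_zero, mul_zero, add_zero]
      exact mul_le_of_le_one_right (Nat.cast_nonneg _) (by exact_mod_cast hS m' hm' hm'₁)
    · have h := hmax m' (Finset.mem_filter.2 ⟨hm', hm'₁⟩)
      rw [div_le_div_iff₀ (by exact_mod_cast Nat.pos_of_ne_zero hm'₁) hmb₁'] at h
      have : (mb 1 : ℚ) * m' 0 + (1 - mb 0) * m' 1 ≤ mb 1 := by linarith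
      exact_mod_cast this

section Jacobian

variable {K} {P Q : MvPolynomial (Fin 2) K}

lemma coeff_X_mul_X_mul_jac (P Q : MvPolynomial (Fin 2) K) (u : Fin 2 →₀ ℕ) :
    coeff u (X 0 * X 1 * Jac K P Q) =
      ∑ x ∈ antidiagonal u, coeff x.1 P * coeff x.2 Q * expDet x.1 x.2 := by
  have : X 0 * X 1 * Jac K P Q =
      X 0 * pderiv 0 P * (X 1 * pderiv 1 Q) - X 1 * pderiv 1 P * (X 0 * pderiv 0 Q) := by
    rw [Jac]
    ring
  rw [this, coeff_sub, coeff_mul, coeff_mul, ← Finset.sum_sub_distrib]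
  refine Finset.sum_congr rfl fun x _ => ?_
  simp only [coeff_X_mul_pderiv, expDet]
  push_cast
  ring

lemma coeff_X_mul_X_mul_jac_add {m₀ n₀ : Fin 2 →₀ ℕ}
    (h : ∀ m ∈ P.support, ∀ n ∈ Q.support, m + n = m₀ + n₀ →
      m = m₀ ∧ n = n₀ ∨ expDet m n = 0) :
    coeff (m₀ + n₀) (X 0 * X 1 * Jac K P Q) = coeff m₀ P * coeff n₀ Q * expDet m₀ n₀ := by
  rw [coeff_X_mul_X_mul_jac]
  refine Finset.sum_eq_single (m₀, n₀) (fun x hx hne => ?_)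
    fun h => (h (mem_antidiagonal.2 rfl)).elim
  by_cases hm : x.1 ∈ P.support
  · by_cases hn : x.2 ∈ Q.support
    · rcases h _ hm _ hn (mem_antidiagonal.1 hx) with ⟨h₁, h₂⟩ | h₀
      · exact absurd (Prod.ext h₁ h₂) hne
      · simp [h₀]
    · simp [notMem_support_iff.1 hn]
  · simp [notMem_support_iff.1 hm]

lemma coeff_mul_coeff_mul_expDet_of_jac_eq_one (hJ : Jac K P Q = 1) {m₀ n₀ : Fin 2 →₀ ℕ}
    (h : ∀ m ∈ P.support, ∀ n ∈ Q.support, m + n = m₀ + n₀ →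
      m = m₀ ∧ n = n₀ ∨ expDet m n = 0) :
    coeff m₀ P * coeff n₀ Q * expDet m₀ n₀ =
      if m₀ + n₀ = single 0 1 + single 1 1 then 1 else 0 := by
  rw [← coeff_X_mul_X_mul_jac_add h, hJ, mul_one, X, X, monomial_mul, one_mul, coeff_monomial]
  exact if_congr eq_comm rfl rfl

lemma add_eq_of_isMax_of_expDet_ne_zero [CharZero K] (hJ : Jac K P Q = 1) {N : Type*}
    [AddCommMonoid N] [PartialOrder N] [IsOrderedCancelAddMonoid N] {φ : (Fin 2 →₀ ℕ) →+ N}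
    (hφ : Injective φ) {m₀ n₀ : Fin 2 →₀ ℕ} (hm₀ : m₀ ∈ P.support) (hn₀ : n₀ ∈ Q.support)
    (hm : ∀ m ∈ P.support, φ m ≤ φ m₀) (hn : ∀ n ∈ Q.support, φ n ≤ φ n₀)
    (hdet : expDet m₀ n₀ ≠ 0) : m₀ + n₀ = single 0 1 + single 1 1 := by
  have key := coeff_mul_coeff_mul_expDet_of_jac_eq_one hJ fun m hm' n hn' hmn =>
    Or.inl (eq_and_eq_of_add_eq_of_le hφ (hm m hm') (hn n hn') hmn)
  by_contra hne
  rw [if_neg hne] at key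
  exact mul_ne_zero (mul_ne_zero (mem_support_iff.1 hm₀) (mem_support_iff.1 hn₀))
    (Int.cast_ne_zero.2 hdet) key

end Jacobian

section Parity

variable {K} {P Q : MvPolynomial (Fin 2) K}

lemma coeff_polyBeta (P : MvPolynomial (Fin 2) K) (m : Fin 2 →₀ ℕ) :
    coeff m (polyBeta K P) = (-1) ^ m 1 * coeff m P := by
  induction P using MvPolynomial.induction_on' with
  | monomial n a =>
    have : polyBeta K (monomial n a) = monomial n ((-1) ^ n 1 * a) := by
      rw [polyBeta, aeval_monomial, Finsupp.prod_fintype _ _ fun _ => pow_zero _, Fin.prod_univ_two,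
        monomial_eq, Finsupp.prod_fintype _ _ fun _ => pow_zero _, Fin.prod_univ_two]
      simp only [Matrix.cons_val_zero, Matrix.cons_val_one, neg_pow (X 1 : MvPolynomial (Fin 2) K),
        algebraMap_eq, map_mul, map_pow, map_neg, map_one]
      ring
    rw [this, coeff_monomial, coeff_monomial]
    split_ifs with h <;> simp [h]
  | add p q hp hq => rw [map_add, coeff_add, coeff_add, hp, hq, mul_add]

variable [NeZero (2 : K)]

lemma even_of_mem_support (hP : polyBeta K P = P) {m : Fin 2 →₀ ℕ} (hm : m ∈ P.support) :
    Even (m 1) := by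
  by_contra hodd
  have h := coeff_polyBeta P m
  rw [hP, (Nat.not_even_iff_odd.1 hodd).neg_one_pow, neg_one_mul, eq_neg_iff_add_eq_zero,
    ← two_mul] at h
  exact mem_support_iff.1 hm ((mul_eq_zero.1 h).resolve_left two_ne_zero)

lemma odd_of_mem_support (hQ : polyBeta K Q = -Q) {n : Fin 2 →₀ ℕ} (hn : n ∈ Q.support) :
    Odd (n 1) := by
  by_contra heven
  have h := coeff_polyBeta Q n
  rw [hQ, (Nat.not_odd_iff_even.1 heven).neg_one_pow, one_mul, coeff_neg, neg_eq_iff_add_eq_zero,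
    ← two_mul] at h
  exact mem_support_iff.1 hn ((mul_eq_zero.1 h).resolve_left two_ne_zero)

end Parity

section NewtonPolygon

variable {K} [CharZero K] {P Q : MvPolynomial (Fin 2) K}

lemma coeff_X_mul_coeff_Y_of_jac_eq_one (hJ : Jac K P Q = 1) (hP : polyBeta K P = P)
    (hQ : polyBeta K Q = -Q) : coeff (single 0 1) P * coeff (single 1 1) Q = 1 := by
  have key := coeff_mul_coeff_mul_expDet_of_jac_eq_one hJ (m₀ := single 0 1) (n₀ := single 1 1)
    fun m hm n hn hmn => by
      obtain ⟨h₀, h₁⟩ := Finsupp.add_eq_single_add_single_iff.1 hmn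
      have hm₁ := Nat.even_iff.1 (even_of_mem_support hP hm)
      have hn₁ := Nat.odd_iff.1 (odd_of_mem_support hQ hn)
      by_cases hm₀ : m 0 = 0
      · right
        simp [expDet, hm₀, show m 1 = 0 by omega]
      · left
        rw [Finsupp.eq_single_zero_one_iff, Finsupp.eq_single_one_one_iff]
        omega
  rwa [if_pos rfl, expDet_single_zero_one_left, Finsupp.single_eq_same, Nat.cast_one,
    Int.cast_one, mul_one] at key

lemma map_le_map_single_one {N : Type*} [AddCommMonoid N] [LinearOrder N]
    [IsOrderedCancelAddMonoid N] (hJ : Jac K P Q = 1) (hQ : polyBeta K Q = -Q)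
    {φ : (Fin 2 →₀ ℕ) →+ N} (hφ : Injective φ) (hX : single 0 1 ∈ P.support)
    (hXmax : ∀ m ∈ P.support, φ m ≤ φ (single 0 1)) {n : Fin 2 →₀ ℕ} (hn : n ∈ Q.support) :
    φ n ≤ φ (single 1 1) := by
  obtain ⟨n₀, hn₀, hmax⟩ := Q.support.exists_max_image φ ⟨n, hn⟩
  have hdet : expDet (single 0 1) n₀ ≠ 0 := by
    rw [expDet_single_zero_one_left]
    exact_mod_cast (odd_of_mem_support hQ hn₀).pos.ne'
  have := add_left_cancel (add_eq_of_isMax_of_expDet_ne_zero hJ hφ hX hn₀ hXmax hmax hdet)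
  exact this ▸ hmax n hn

lemma weight_le_of_forall_weight_le (hJ : Jac K P Q = 1) (hQ : polyBeta K Q = -Q) {a b : ℤ}
    (ha : a ≠ 0) (hX : single 0 1 ∈ P.support) (hw : ∀ m ∈ P.support, a * m 0 + b * m 1 ≤ a)
    {n : Fin 2 →₀ ℕ} (hn : n ∈ Q.support) : a * n 0 + b * n 1 ≤ b := by
  have hφ : Injective (lexWeight a b 0 (-1)) := lexWeight_injective (by simpa using ha)
  have := map_le_map_single_one hJ hQ hφ hX (fun m hm => by
    rw [lexWeight_apply, lexWeight_single_zero_one, Prod.Lex.toLex_le_toLex]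
    exact (hw m hm).lt_or_eq.imp_right fun h => ⟨h, by omega⟩) hn
  rw [lexWeight_apply, lexWeight_single_one_one, Prod.Lex.toLex_le_toLex] at this
  exact this.elim le_of_lt fun h => h.1.le

lemma apply_zero_le_one_of_mem_support (hJ : Jac K P Q = 1) (hP : polyBeta K P = P)
    (hQ : polyBeta K Q = -Q) {m : Fin 2 →₀ ℕ} (hm : m ∈ P.support) (hm₁ : m 1 = 0) :
    m 0 ≤ 1 := by
  have h₁ := coeff_X_mul_coeff_Y_of_jac_eq_one hJ hP hQ
  -- lowest `Y`-degree first, then highest `X`-degree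
  obtain ⟨m₀, hm₀, hmax⟩ := P.support.exists_max_image (lexWeight 0 (-1) 1 0) ⟨m, hm⟩
  obtain ⟨n₀, hn₀, hnmax⟩ := Q.support.exists_max_image (lexWeight 0 (-1) 1 0)
    ⟨_, mem_support_iff.2 (right_ne_zero_of_mul_eq_one h₁)⟩
  have hXm₀ := hmax _ (mem_support_iff.2 (left_ne_zero_of_mul_eq_one h₁))
  have hmm₀ := hmax m hm
  rw [lexWeight_single_zero_one, lexWeight_apply, Prod.Lex.toLex_le_toLex] at hXm₀
  rw [lexWeight_apply, lexWeight_apply, Prod.Lex.toLex_le_toLex] at hmm₀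
  have hn₀₁ := (odd_of_mem_support hQ hn₀).pos
  have hm₀₁ : m₀ 1 = 0 := by omega
  have hdet : expDet m₀ n₀ ≠ 0 := by
    rw [expDet, hm₀₁, Nat.cast_zero, zero_mul, sub_zero]
    exact mul_ne_zero (by omega) (by omega)
  have := Finsupp.add_eq_single_add_single_iff.1 <| add_eq_of_isMax_of_expDet_ne_zero hJ
    (lexWeight_injective (by norm_num)) hm₀ hn₀ hmax hnmax hdet
  omega

lemma apply_zero_eq_zero_of_mem_support (hJ : Jac K P Q = 1) (hP : polyBeta K P = P)
    (hQ : polyBeta K Q = -Q) {m : Fin 2 →₀ ℕ} (hm : m ∈ P.support) (hm₁ : m 1 ≠ 0) :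
    m 0 = 0 := by
  by_contra hm₀
  have h₁ := coeff_X_mul_coeff_Y_of_jac_eq_one hJ hP hQ
  have hX := mem_support_iff.2 (left_ne_zero_of_mul_eq_one h₁)
  have hY := mem_support_iff.2 (right_ne_zero_of_mul_eq_one h₁)
  obtain ⟨mb, hmb, hA, hB, hw⟩ := exists_supporting_weight
    (fun m' hm' => apply_zero_le_one_of_mem_support hJ hP hQ hm') hm hm₀ hm₁
  have hB' : (mb 1 : ℤ) ≠ 0 := by omega
  obtain ⟨ms, hms, hmsmax⟩ := P.support.exists_max_image (lexWeight (mb 1) (1 - mb 0) 0 1) ⟨_, hmb⟩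
  obtain ⟨ns, hns, hnsmax⟩ := Q.support.exists_max_image (lexWeight (mb 1) (1 - mb 0) 0 1) ⟨_, hY⟩
  obtain ⟨hwms, hms₁⟩ : (mb 1 : ℤ) * ms 0 + (1 - mb 0) * ms 1 = mb 1 ∧ (mb 1 : ℤ) ≤ ms 1 := by
    have hmbms := hmsmax mb hmb
    rw [lexWeight_apply, lexWeight_apply, Prod.Lex.toLex_le_toLex] at hmbms
    have := hw ms hms
    rcases hmbms with h | ⟨h, h'⟩
    · linarith
    · constructor <;> linarith
  have hwns : (mb 1 : ℤ) * ns 0 + (1 - mb 0) * ns 1 = 1 - mb 0 := by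
    have hYns := hnsmax _ hY
    rw [lexWeight_single_one_one, lexWeight_apply, Prod.Lex.toLex_le_toLex] at hYns
    have := weight_le_of_forall_weight_le hJ hQ hB' hX hw hns
    rcases hYns with h | ⟨h, -⟩ <;> linarith
  have hns₁ := (odd_of_mem_support hQ hns).pos
  have hdet : expDet ms ns ≠ 0 := fun h₀ => by
    have := mul_expDet_of_weight_eq hwms hwns
    rw [h₀, mul_zero] at this
    nlinarith
  have := Finsupp.add_eq_single_add_single_iff.1 <| add_eq_of_isMax_of_expDet_ne_zero hJ
    (lexWeight_injective (by simpa using hB')) hms hns hmsmax hnsmax hdet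
  omega

lemma eq_single_or_apply_zero_eq_zero (hJ : Jac K P Q = 1) (hP : polyBeta K P = P)
    (hQ : polyBeta K Q = -Q) {m : Fin 2 →₀ ℕ} (hm : m ∈ P.support) :
    m = single 0 1 ∨ m 0 = 0 := by
  by_cases hm₁ : m 1 = 0
  · have := apply_zero_le_one_of_mem_support hJ hP hQ hm hm₁
    rw [Finsupp.eq_single_zero_one_iff]
    omega
  · exact Or.inr (apply_zero_eq_zero_of_mem_support hJ hP hQ hm hm₁)

lemma eq_single_one_of_mem_support (hJ : Jac K P Q = 1) (hP : polyBeta K P = P)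
    (hQ : polyBeta K Q = -Q) {n : Fin 2 →₀ ℕ} (hn : n ∈ Q.support) : n = single 1 1 := by
  have hX := mem_support_iff.2
    (left_ne_zero_of_mul_eq_one (coeff_X_mul_coeff_Y_of_jac_eq_one hJ hP hQ))
  have := map_le_map_single_one hJ hQ (lexWeight_injective (a := 1) (b := 0) (c := 0) (d := 1)
    one_ne_zero) hX (fun m hm => by
      rw [lexWeight_apply, lexWeight_single_zero_one, Prod.Lex.toLex_le_toLex]
      rcases eq_single_or_apply_zero_eq_zero hJ hP hQ hm with rfl | hm₀
      · simp
      · simp [hm₀]) hn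
  rw [lexWeight_apply, lexWeight_single_one_one, Prod.Lex.toLex_le_toLex] at this
  have hn₁ := Nat.odd_iff.1 (odd_of_mem_support hQ hn)
  rw [Finsupp.eq_single_one_one_iff]
  omega

lemma eq_C_mul_X_one (hJ : Jac K P Q = 1) (hP : polyBeta K P = P) (hQ : polyBeta K Q = -Q) :
    Q = C (coeff (single 1 1) Q) * X 1 := by
  ext n
  rw [coeff_C_mul, coeff_X]
  split_ifs with h
  · rw [h, mul_one]
  · rw [mul_zero, ← notMem_support_iff]
    exact fun hn => h (eq_single_one_of_mem_support hJ hP hQ hn).symm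

lemma sub_C_mul_X_zero_mem_adjoin (hJ : Jac K P Q = 1) (hP : polyBeta K P = P)
    (hQ : polyBeta K Q = -Q) :
    P - C (coeff (single 0 1) P) * X 0 ∈ Algebra.adjoin K {X 1 ^ 2} := by
  refine mem_adjoin_X_pow_of_support fun m hm => ?_
  rw [mem_support_iff, coeff_sub, coeff_C_mul, coeff_X] at hm
  by_cases h : single 0 1 = m
  · rw [if_pos h, ← h, mul_one, sub_self] at hm
    exact absurd rfl hm
  rw [if_neg h, mul_zero, sub_zero, ← mem_support_iff] at hm
  have hm₀ := (eq_single_or_apply_zero_eq_zero hJ hP hQ hm).resolve_left (Ne.symm h)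
  obtain ⟨k, hk⟩ := even_of_mem_support hP hm
  exact ⟨k, Finsupp.ext (Fin.forall_fin_two.2 ⟨by simp [hm₀], by simp [hk, two_mul]⟩)⟩

end NewtonPolygon

theorem stmt_15 [CharZero K] (P Q : MvPolynomial (Fin 2) K)
    (hJ : Jac K P Q = 1) (hP : polyBeta K P = P) (hQ : polyBeta K Q = -Q) :
    ∃ (lam : K) (_ : lam ≠ 0) (g : Polynomial K),
      Q = C lam * X 1 ∧
      P = C lam⁻¹ * X 0 + Polynomial.aeval ((X 1 : MvPolynomial (Fin 2) K) ^ 2) g := by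
  have h₁ := coeff_X_mul_coeff_Y_of_jac_eq_one hJ hP hQ
  have hR := sub_C_mul_X_zero_mem_adjoin hJ hP hQ
  rw [Algebra.adjoin_singleton_eq_range_aeval, eq_inv_of_mul_eq_one_left h₁] at hR
  obtain ⟨g, hg⟩ := hR
  exact ⟨_, right_ne_zero_of_mul_eq_one h₁, g, eq_C_mul_X_one hJ hP hQ,
    (sub_eq_iff_eq_add').1 hg.symm⟩
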